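/- Greedy set cover bound: Let M and Y be finite sets with Y nonempty, and R ⊆ M × Y a relation such that for each y ∈ Y, |{a ∈ M : (a,y) ∈ R}| ≥ μ·|M| with 0 < μ ≤ 1. Then there exists H ⊆ M with |H| ≤ ⌈log|Y| / (−log(1−μ))⌉ + 1 such that every y ∈ Y is related to some a ∈ H. -/
import Mathlib


theorem stmt6 {α β : Type*} (M : Finset α) (Y : Finset β) (hM : M.Nonempty) (hY : Y.Nonempty)
    (R : α → β → Prop) [∀ a b, Decidable (R a b)] (μ : ℝ) (hμ0 : 0 < μ) (hμ1 : μ < 1)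
    (hdeg : ∀ y ∈ Y, μ * M.card ≤ ((M.filter fun a => R a y).card : ℝ)) :
    ∃ H ⊆ M, H.card ≤ ⌈Real.log Y.card / (-Real.log (1 - μ))⌉₊ + 1 ∧
      ∀ y ∈ Y, ∃ a ∈ H, R a y := by
  classical
  set N := ⌈Real.log Y.card / (-Real.log (1 - μ))⌉₊ with hN
  have h1μ : (0:ℝ) < 1 - μ := by linarith
  have key : ∀ n : ℕ, ∀ S : Finset β, S ⊆ Y → (S.card : ℝ) * (1-μ)^n < 1 →
      ∃ H ⊆ M, H.card ≤ n ∧ ∀ y ∈ S, ∃ a ∈ H, R a y := by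
    intro n
    induction n with
    | zero =>
      intro S hS hlt
      refine ⟨∅, Finset.empty_subset _, le_rfl, ?_⟩
      simp only [pow_zero, mul_one] at hlt
      have hSe : S = ∅ := by
        by_contra h
        have h1 := Finset.card_pos.mpr (Finset.nonempty_of_ne_empty h)
        have h2 : (1:ℝ) ≤ S.card := by exact_mod_cast h1
        linarith
      simp [hSe]
    | succ n ih =>
      intro S hS hlt
      rcases S.eq_empty_or_nonempty with rfl | hSne
      · exact ⟨∅, Finset.empty_subset _, Nat.zero_le _, by simp⟩
      have havg : ∃ a ∈ M, μ * S.card ≤ ((S.filter fun y => R a y).card : ℝ) := by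
        by_contra h
        push_neg at h
        have hsum : (∑ a ∈ M, ((S.filter fun y => R a y).card : ℝ)) <
            ∑ _a ∈ M, μ * S.card :=
          Finset.sum_lt_sum_of_nonempty hM h
        have hswap : (∑ a ∈ M, ((S.filter fun y => R a y).card : ℝ))
            = ∑ y ∈ S, ((M.filter fun a => R a y).card : ℝ) := by
          simp only [Finset.card_filter]
          push_cast
          rw [Finset.sum_comm]
        have hlow : (μ * M.card) * S.card ≤ ∑ y ∈ S, ((M.filter fun a => R a y).card : ℝ) := by
          calc (μ * M.card) * S.card = ∑ _y ∈ S, μ * M.card := by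
                rw [Finset.sum_const, nsmul_eq_mul]; ring
            _ ≤ _ := Finset.sum_le_sum fun y hy => hdeg y (hS hy)
        rw [hswap, Finset.sum_const, nsmul_eq_mul] at hsum
        nlinarith [lt_of_le_of_lt hlow hsum]
      obtain ⟨a, haM, hacov⟩ := havg
      set S' := S.filter (fun y => ¬ R a y) with hS'
      have hcard' : (S'.card : ℝ) ≤ (1 - μ) * S.card := by
        have hle : (S.filter fun y => R a y).card ≤ S.card :=
          Finset.card_le_card (Finset.filter_subset _ _)
        have hceq : S'.card = S.card - (S.filter fun y => R a y).card := by
          rw [hS', Finset.filter_not, Finset.card_sdiff_of_subset (Finset.filter_subset _ _)]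
        have hre : (S'.card : ℝ) = (S.card : ℝ) - (S.filter fun y => R a y).card := by
          rw [hceq]; push_cast [hle]; ring
        rw [hre]; nlinarith
      have hlt' : (S'.card : ℝ) * (1-μ)^n < 1 := by
        calc (S'.card : ℝ) * (1-μ)^n ≤ ((1-μ) * S.card) * (1-μ)^n :=
              mul_le_mul_of_nonneg_right hcard' (by positivity)
          _ = (S.card : ℝ) * (1-μ)^(n+1) := by ring
          _ < 1 := hlt
      obtain ⟨H', hH'M, hH'card, hH'cov⟩ :=
        ih S' (fun y hy => hS (Finset.mem_of_mem_filter _ hy)) hlt'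
      refine ⟨insert a H', Finset.insert_subset haM hH'M, ?_, ?_⟩
      · calc (insert a H').card ≤ H'.card + 1 := Finset.card_insert_le _ _
          _ ≤ n + 1 := by omega
      · intro y hy
        by_cases hRay : R a y
        · exact ⟨a, Finset.mem_insert_self _ _, hRay⟩
        · obtain ⟨b, hb, hRb⟩ := hH'cov y (Finset.mem_filter.mpr ⟨hy, hRay⟩)
          exact ⟨b, Finset.mem_insert_of_mem hb, hRb⟩
  have hYpos : (1:ℝ) ≤ Y.card := by exact_mod_cast Finset.card_pos.mpr hY
  have hlogpos : 0 < -Real.log (1 - μ) := by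
    simp only [neg_pos]
    exact Real.log_neg h1μ (by linarith)
  have hNge : Real.log Y.card / (-Real.log (1 - μ)) ≤ (N : ℝ) := Nat.le_ceil _
  have hmain : (Y.card : ℝ) * (1-μ)^(N+1) < 1 := by
    have h2 : Real.log Y.card ≤ (N : ℝ) * (-Real.log (1-μ)) := by
      rw [div_le_iff₀ hlogpos] at hNge; linarith
    have h3 : Real.log ((Y.card : ℝ) * (1-μ)^(N+1)) < 0 := by
      rw [Real.log_mul (by positivity) (by positivity), Real.log_pow]
      push_cast
      have hl : Real.log (1-μ) < 0 := Real.log_neg h1μ (by linarith)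
      nlinarith
    exact (Real.log_neg_iff (by positivity)).mp h3
  exact key (N+1) Y (subset_refl _) hmain
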